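/- Let ℓ be an odd prime, n ≥ 1, and γ ∈ GL₂(Z/ℓⁿZ) such that the reduction of γ modulo ℓ is not a scalar matrix. If Δ(γ) is a square in Z/ℓⁿZ, then γ has an eigenvector: there exist a primitive vector v ∈ (Z/ℓⁿZ)² and λ ∈ Z/ℓⁿZ with γ·v = λ·v. -/

import Mathlib

/-!
If `2` is invertible and `Δ = s²`, then `λ± = (tr γ ± s)/2` are roots of the characteristic
polynomial, so `(b, λ - a)` and `(λ - d, c)` are eigenvectors of `γ = !![a, b; c, d]`.
One of them is primitive: `(b, λ₊ - a)` if `ℓ ∤ b`, `(λ₊ - d, c)` if `ℓ ∤ c`, and otherwise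
`a ≢ d` because `γ` is not scalar mod `ℓ`, while `(λ₊ - a) + (λ₋ - a) = d - a`, so one of the
second coordinates `λ± - a` is a unit.
-/

/-- A vector in `(ZMod N)²` is primitive (w.r.t. `ℓ ∣ N`) if its reduction
modulo `ℓ` is nonzero. -/
def IsPrimitive (ℓ N : ℕ) (h : ℓ ∣ N) (v : Fin 2 → ZMod N) : Prop :=
  (fun i => ZMod.castHom h (ZMod ℓ) (v i)) ≠ 0

theorem sq_sub_mul_add_eq_zero_of_sq_sub_eq_sq {R : Type*} [CommRing R] {t δ s e : R}
    (he : 2 * e = 1) (hs : t ^ 2 - 4 * δ = s ^ 2) :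
    (e * (t + s)) ^ 2 - t * (e * (t + s)) + δ = 0 := by
  linear_combination (t * e * (t + s) - δ * (1 + 2 * e)) * he - e ^ 2 * hs

namespace Matrix

variable {R : Type*} [CommRing R]

theorem eq_smul_one_of_fin_two {N : Matrix (Fin 2) (Fin 2) R}
    (h01 : N 0 1 = 0) (h10 : N 1 0 = 0) (h11 : N 1 1 = N 0 0) : N = N 0 0 • 1 := by
  ext i j
  fin_cases i <;> fin_cases j <;> simp [h01, h10, h11]

theorem mulVec_fin_two_eq_smul_of_isRoot_left (M : Matrix (Fin 2) (Fin 2) R) {lam : R}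
    (hlam : lam ^ 2 - M.trace * lam + M.det = 0) :
    M *ᵥ ![M 0 1, lam - M 0 0] = lam • ![M 0 1, lam - M 0 0] := by
  rw [trace_fin_two, det_fin_two] at hlam
  rw [mulVec_fin_two, smul_vec2]
  refine vec2_eq ?_ ?_ <;> simp only [cons_val_zero, cons_val_one, smul_eq_mul]
  · ring
  · linear_combination -hlam

theorem mulVec_fin_two_eq_smul_of_isRoot_right (M : Matrix (Fin 2) (Fin 2) R) {lam : R}
    (hlam : lam ^ 2 - M.trace * lam + M.det = 0) :
    M *ᵥ ![lam - M 1 1, M 1 0] = lam • ![lam - M 1 1, M 1 0] := by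
  rw [trace_fin_two, det_fin_two] at hlam
  rw [mulVec_fin_two, smul_vec2]
  refine vec2_eq ?_ ?_ <;> simp only [cons_val_zero, cons_val_one, smul_eq_mul]
  · linear_combination -hlam
  · ring

theorem exists_mulVec_eq_smul_of_not_map_eq_smul_one {S : Type*} [CommRing S]
    (π : R →+* S) (h2 : IsUnit (2 : R)) (M : Matrix (Fin 2) (Fin 2) R)
    (hM : ¬ ∃ c : S, M.map π = c • 1) {s : R} (hs : M.trace ^ 2 - 4 * M.det = s ^ 2) :
    ∃ (v : Fin 2 → R) (lam : R), (fun i => π (v i)) ≠ 0 ∧ M *ᵥ v = lam • v := by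
  obtain ⟨e, he⟩ := h2.exists_right_inv
  have hroot := sq_sub_mul_add_eq_zero_of_sq_sub_eq_sq he hs
  have hroot_neg := sq_sub_mul_add_eq_zero_of_sq_sub_eq_sq (s := -s) he (by rw [hs]; ring)
  have hne : ∀ (v : Fin 2 → R) (i : Fin 2), π (v i) ≠ 0 → (fun i => π (v i)) ≠ 0 :=
    fun v i hi h0 => hi (congrFun h0 i)
  by_cases hb : π (M 0 1) = 0
  · by_cases hc : π (M 1 0) = 0
    · have had : π (M 1 1 - M 0 0) ≠ 0 := by
        rw [map_sub, sub_ne_zero]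
        exact fun h => hM ⟨_, eq_smul_one_of_fin_two (N := M.map π) hb hc h⟩
      have hsum : (e * (M.trace + s) - M 0 0) + (e * (M.trace + -s) - M 0 0) = M 1 1 - M 0 0 := by
        rw [trace_fin_two]; linear_combination (M 0 0 + M 1 1) * he
      by_cases hplus : π (e * (M.trace + s) - M 0 0) = 0
      · refine ⟨_, _, hne _ 1 ?_, mulVec_fin_two_eq_smul_of_isRoot_left M hroot_neg⟩
        simpa [← hsum, hplus] using had
      · exact ⟨_, _, hne _ 1 (by simpa using hplus), mulVec_fin_two_eq_smul_of_isRoot_left M hroot⟩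
    · exact ⟨_, _, hne _ 1 (by simpa using hc), mulVec_fin_two_eq_smul_of_isRoot_right M hroot⟩
  · exact ⟨_, _, hne _ 0 (by simpa using hb), mulVec_fin_two_eq_smul_of_isRoot_left M hroot⟩

end Matrix

theorem ZMod.isUnit_two_pow_of_prime {ℓ : ℕ} (hℓ : ℓ.Prime) (hℓodd : ℓ ≠ 2) (n : ℕ) :
    IsUnit (2 : ZMod (ℓ ^ n)) := by
  rw [show (2 : ZMod (ℓ ^ n)) = ((2 : ℕ) : ZMod (ℓ ^ n)) by norm_cast, ZMod.isUnit_iff_coprime]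
  exact ((Nat.coprime_primes Nat.prime_two hℓ).mpr hℓodd.symm).pow_right n

/-- For an odd prime `ℓ`, `n ≥ 1`, and `γ ∈ GL₂(ℤ/ℓⁿℤ)` whose reduction
mod `ℓ` is not scalar: if the discriminant `(tr γ)² - 4 det γ` is a square mod `ℓⁿ`, then
`γ` has a primitive eigenvector. -/
theorem stmt_3 (ℓ n : ℕ) (hℓ : ℓ.Prime) (hℓodd : ℓ ≠ 2) (hn : 1 ≤ n)
    (γ : Matrix.GeneralLinearGroup (Fin 2) (ZMod (ℓ ^ n)))
    (hred : ¬ ∃ c : ZMod ℓ,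
      γ.val.map (ZMod.castHom (dvd_pow_self ℓ (by omega : n ≠ 0)) (ZMod ℓ))
        = c • (1 : Matrix (Fin 2) (Fin 2) (ZMod ℓ)))
    (hsq : ∃ s : ZMod (ℓ ^ n), (Matrix.trace γ.val) ^ 2 - 4 * γ.val.det = s ^ 2) :
    ∃ (v : Fin 2 → ZMod (ℓ ^ n)) (lam : ZMod (ℓ ^ n)),
      IsPrimitive ℓ (ℓ ^ n) (dvd_pow_self ℓ (by omega : n ≠ 0)) v ∧
      γ.val.mulVec v = lam • v := by
  obtain ⟨s, hs⟩ := hsq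
  exact Matrix.exists_mulVec_eq_smul_of_not_map_eq_smul_one _
    (ZMod.isUnit_two_pow_of_prime hℓ hℓodd n) γ.val hred hs
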